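/- Under the hypotheses that ∫∫ R(x,y)(u(x)−u(y))² p(x)p(y) dμ dμ ≥ C‖u‖²_{L²} for mean-zero u (Theorem 3.11) and the symmetrization identity, any solution u (with ∫ u p dμ = 0) of L_t u = r satisfies C‖u‖²_{L²(M)} ≤ 2t c₁ ‖u‖_{L²}‖r‖_{L²}, hence ‖u‖_{L²(M)} ≤ (2t c₁/C) ‖r‖_{L²(M)} (with the paper's normalization L_t includes the factor 1/t and C_t, giving ‖u‖_{L²} ≤ C'‖r‖_{L²} with C' independent of t). -/

import Mathlib

/-!
Testing the equation `L_t u = r` against `u p` and symmetrizing turns `∫ u r p` into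
`(1 / 2t)` times the nonlocal Dirichlet energy of `u`, which by coercivity is at least
`C ‖u‖²`. Bounding `∫ u r p` by `c₁ ‖u‖ ‖r‖` (Cauchy–Schwarz) and cancelling one factor
`‖u‖` gives the estimate.
-/

open MeasureTheory

theorem Real.sqrt_le_div_mul_sqrt_of_mul_le {A B C K : ℝ} (hA : 0 ≤ A) (hC : 0 < C)
    (hK : 0 ≤ K) (h : C * A ≤ K * (√A * √B)) : √A ≤ K / C * √B := by
  rcases hA.eq_or_lt with rfl | hA
  · rw [Real.sqrt_zero]
    positivity
  have hsqrtA : 0 < √A := Real.sqrt_pos.2 hA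
  rw [div_mul_eq_mul_div, le_div_iff₀ hC]
  refine le_of_mul_le_mul_left ?_ hsqrtA
  calc √A * (√A * C) = C * A := by rw [← mul_assoc, Real.mul_self_sqrt hA.le, mul_comm]
    _ ≤ K * (√A * √B) := h
    _ = √A * (K * √B) := by ring

section WeightedCauchySchwarz

variable {α : Type*} [MeasurableSpace α] {μ : Measure α} {u r : α → ℝ}

theorem integral_abs_mul_abs_le_sqrt_mul_sqrt (hu : MemLp u 2 μ) (hr : MemLp r 2 μ) :
    ∫ x, |u x| * |r x| ∂μ ≤ √(∫ x, u x ^ 2 ∂μ) * √(∫ x, r x ^ 2 ∂μ) := by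
  have hHolder := integral_mul_norm_le_Lp_mul_Lq Real.HolderConjugate.two_two
    (by rwa [ENNReal.ofReal_ofNat] : MemLp u _ μ) (by rwa [ENNReal.ofReal_ofNat] : MemLp r _ μ)
  simpa only [Real.norm_eq_abs, Real.rpow_two, sq_abs, ← Real.sqrt_eq_rpow] using hHolder

theorem integral_mul_mul_le_mul_sqrt_mul_sqrt {p : α → ℝ} {K : ℝ} (hK : 0 ≤ K)
    (hp : ∀ x, |p x| ≤ K) (hu : MemLp u 2 μ) (hr : MemLp r 2 μ) :
    ∫ x, u x * r x * p x ∂μ ≤ K * (√(∫ x, u x ^ 2 ∂μ) * √(∫ x, r x ^ 2 ∂μ)) := by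
  have hur : Integrable (fun x => |u x| * |r x|) μ := by
    simpa only [Pi.mul_apply, abs_mul] using (hu.integrable_mul hr).abs
  calc ∫ x, u x * r x * p x ∂μ ≤ ‖∫ x, u x * r x * p x ∂μ‖ := Real.le_norm_self _
    _ ≤ ∫ x, K * (|u x| * |r x|) ∂μ := by
        refine norm_integral_le_of_norm_le (hur.const_mul K) (.of_forall fun x => ?_)
        rw [Real.norm_eq_abs, abs_mul, abs_mul, mul_comm]
        exact mul_le_mul_of_nonneg_right (hp x) (by positivity)
    _ = K * ∫ x, |u x| * |r x| ∂μ := integral_const_mul K _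
    _ ≤ K * (√(∫ x, u x ^ 2 ∂μ) * √(∫ x, r x ^ 2 ∂μ)) :=
        mul_le_mul_of_nonneg_left (integral_abs_mul_abs_le_sqrt_mul_sqrt hu hr) hK

end WeightedCauchySchwarz

theorem stmt15_general {M : Type*} [MeasurableSpace M] (μ : Measure M)
    (Rt : M → M → ℝ)
    (p : M → ℝ)
    (c₀ c₁ : ℝ) (hc₀ : 0 < c₀) (hp : ∀ x, c₀ ≤ p x ∧ p x ≤ c₁)
    (t : ℝ) (ht : 0 < t) (C : ℝ) (hC : 0 < C)
    (u r : M → ℝ) (hu : MemLp u 2 μ) (hr : MemLp r 2 μ)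
    (heq : ∀ x, (1 / t) * ∫ y, Rt x y * (u x - u y) * p y ∂μ = r x)
    (hcoer : C * ∫ x, (u x) ^ 2 ∂μ ≤
      ∫ x, ∫ y, Rt x y * (u x - u y) ^ 2 * p x * p y ∂μ ∂μ)
    (hsymid : ∫ x, u x * ((1 / t) * ∫ y, Rt x y * (u x - u y) * p y ∂μ) * p x ∂μ =
      (1 / (2 * t)) * ∫ x, ∫ y, Rt x y * (u x - u y) ^ 2 * p x * p y ∂μ ∂μ) :
    Real.sqrt (∫ x, (u x) ^ 2 ∂μ) ≤
      (2 * t * c₁ / C) * Real.sqrt (∫ x, (r x) ^ 2 ∂μ) := by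
  rcases isEmpty_or_nonempty M with hM | ⟨⟨x₀⟩⟩
  · simp [Measure.eq_zero_of_isEmpty μ]
  have hc₁ : 0 ≤ c₁ := hc₀.le.trans ((hp x₀).1.trans (hp x₀).2)
  have hp_abs : ∀ x, |p x| ≤ c₁ := fun x =>
    abs_le.2 ⟨by linarith [(hp x).1], (hp x).2⟩
  have henergy : ∫ x, u x * r x * p x ∂μ =
      (1 / (2 * t)) * ∫ x, ∫ y, Rt x y * (u x - u y) ^ 2 * p x * p y ∂μ ∂μ := by
    simpa only [heq] using hsymid
  refine Real.sqrt_le_div_mul_sqrt_of_mul_le (integral_nonneg fun x => sq_nonneg _) hC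
    (by positivity) ?_
  calc C * ∫ x, u x ^ 2 ∂μ ≤ ∫ x, ∫ y, Rt x y * (u x - u y) ^ 2 * p x * p y ∂μ ∂μ := hcoer
    _ = 2 * t * ∫ x, u x * r x * p x ∂μ := by rw [henergy]; field_simp
    _ ≤ 2 * t * (c₁ * (√(∫ x, u x ^ 2 ∂μ) * √(∫ x, r x ^ 2 ∂μ))) := by
        gcongr
        exact integral_mul_mul_le_mul_sqrt_mul_sqrt hc₁ hp_abs hu hr
    _ = 2 * t * c₁ * (√(∫ x, u x ^ 2 ∂μ) * √(∫ x, r x ^ 2 ∂μ)) := by ring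

/-- L² stability of `L_t u(x) = (1/t)∫ R_t(x,y)(u(x)−u(y))p(y)dμ(y)`:
assuming the coercivity `∫∫ R_t(x,y)(u x − u y)² p p dμdμ ≥ C‖u‖²` for the weighted
mean-zero solution `u` of `L_t u = r`, together with the symmetrization identity,
and `0 < c₀ ≤ p ≤ c₁`, one gets `‖u‖_{L²} ≤ (2 t c₁ / C) ‖r‖_{L²}`. -/
theorem stmt15 {M : Type*} [MeasurableSpace M] (μ : Measure M) [IsFiniteMeasure μ]
    (Rt : M → M → ℝ) (hRmeas : Measurable (Function.uncurry Rt))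
    (hRnn : ∀ x y, 0 ≤ Rt x y) (hRsym : ∀ x y, Rt x y = Rt y x)
    (p : M → ℝ) (hpmeas : Measurable p)
    (c₀ c₁ : ℝ) (hc₀ : 0 < c₀) (hp : ∀ x, c₀ ≤ p x ∧ p x ≤ c₁)
    (t : ℝ) (ht : 0 < t) (C : ℝ) (hC : 0 < C)
    (u r : M → ℝ) (hu : MemLp u 2 μ) (hr : MemLp r 2 μ)
    (humean : (∫ x, u x * p x ∂μ) = 0)
    (heq : ∀ x, (1 / t) * ∫ y, Rt x y * (u x - u y) * p y ∂μ = r x)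
    (hcoer : C * ∫ x, (u x) ^ 2 ∂μ ≤
      ∫ x, ∫ y, Rt x y * (u x - u y) ^ 2 * p x * p y ∂μ ∂μ)
    (hsymid : ∫ x, u x * ((1 / t) * ∫ y, Rt x y * (u x - u y) * p y ∂μ) * p x ∂μ =
      (1 / (2 * t)) * ∫ x, ∫ y, Rt x y * (u x - u y) ^ 2 * p x * p y ∂μ ∂μ) :
    Real.sqrt (∫ x, (u x) ^ 2 ∂μ) ≤
      (2 * t * c₁ / C) * Real.sqrt (∫ x, (r x) ^ 2 ∂μ) :=
  stmt15_general μ Rt p c₀ c₁ hc₀ hp t ht C hC u r hu hr heq hcoer hsymid
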